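/- For any unit vectors a, a', b, b' in ℝ³, the Bell-CHSH operator B = (a·σ)⊗((b+b')·σ) + (a'·σ)⊗((b−b')·σ) satisfies Tr(B ρ) ≤ 2 for every separable two-qubit density matrix ρ. -/

import Mathlib

open Matrix Kronecker
open scoped ComplexOrder

set_option maxHeartbeats 1000000

def SepState {nA nB : Type*} [Fintype nA] [Fintype nB]
    (ρ : Matrix (nA × nB) (nA × nB) ℂ) : Prop :=
  ∃ (k : ℕ) (p : Fin k → ℝ) (a : Fin k → nA → ℂ) (b : Fin k → nB → ℂ),
    (∀ i, 0 ≤ p i) ∧ (∑ i, p i = 1) ∧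
    (∀ i, ∑ x, ‖a i x‖ ^ 2 = 1) ∧ (∀ i, ∑ x, ‖b i x‖ ^ 2 = 1) ∧
    ρ = ∑ i, (p i : ℂ) •
      (vecMulVec (a i) (star (a i)) ⊗ₖ vecMulVec (b i) (star (b i)))

def pauliX : Matrix (Fin 2) (Fin 2) ℂ := !![0, 1; 1, 0]
def pauliY : Matrix (Fin 2) (Fin 2) ℂ := !![0, -Complex.I; Complex.I, 0]
def pauliZ : Matrix (Fin 2) (Fin 2) ℂ := !![1, 0; 0, -1]

/-- `v · σ` for a real vector `v ∈ ℝ³`. -/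
noncomputable def dotSigma (v : Fin 3 → ℝ) : Matrix (Fin 2) (Fin 2) ℂ :=
  (v 0 : ℂ) • pauliX + (v 1 : ℂ) • pauliY + (v 2 : ℂ) • pauliZ

/-- The Bell-CHSH operator. -/
noncomputable def chshOp (a a' b b' : Fin 3 → ℝ) :
    Matrix ((Fin 2) × (Fin 2)) ((Fin 2) × (Fin 2)) ℂ :=
  dotSigma a ⊗ₖ dotSigma (b + b') + dotSigma a' ⊗ₖ dotSigma (b - b')



/-- Cauchy–Schwarz in 3 scalar variables. -/
lemma cs3 (x0 x1 x2 y0 y1 y2 : ℝ) :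
    (x0*y0 + x1*y1 + x2*y2)^2 ≤ (x0^2+x1^2+x2^2) * (y0^2+y1^2+y2^2) := by
  nlinarith [sq_nonneg (x0*y1 - x1*y0), sq_nonneg (x0*y2 - x2*y0), sq_nonneg (x1*y2 - x2*y1)]

lemma bessel3 (p0 p1 p2 q0 q1 q2 n0 n1 n2 : ℝ) (hn : n0^2+n1^2+n2^2 = 1)
    (horth : p0*q0+p1*q1+p2*q2 = 0) :
    (p0*n0+p1*n1+p2*n2)^2*(q0^2+q1^2+q2^2) + (q0*n0+q1*n1+q2*n2)^2*(p0^2+p1^2+p2^2)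
      ≤ (p0^2+p1^2+p2^2)*(q0^2+q1^2+q2^2) := by
  have hP : (0:ℝ) ≤ p0^2+p1^2+p2^2 := by positivity
  have hQ : (0:ℝ) ≤ q0^2+q1^2+q2^2 := by positivity
  have hs : (p0*n0+p1*n1+p2*n2)^2 ≤ (p0^2+p1^2+p2^2) := by
    have := cs3 p0 p1 p2 n0 n1 n2; rw [hn] at this; linarith
  have ht : (q0*n0+q1*n1+q2*n2)^2 ≤ (q0^2+q1^2+q2^2) := by
    have := cs3 q0 q1 q2 n0 n1 n2; rw [hn] at this; linarith
  rcases eq_or_lt_of_le hP with hP0 | hP0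
  · have h0 : p0*n0+p1*n1+p2*n2 = 0 := by nlinarith [sq_nonneg (p0*n0+p1*n1+p2*n2)]
    rw [h0]; nlinarith [sq_nonneg (q0*n0+q1*n1+q2*n2)]
  rcases eq_or_lt_of_le hQ with hQ0 | hQ0
  · have h0 : q0*n0+q1*n1+q2*n2 = 0 := by nlinarith [sq_nonneg (q0*n0+q1*n1+q2*n2)]
    rw [h0]; nlinarith [sq_nonneg (p0*n0+p1*n1+p2*n2)]
  set P : ℝ := p0^2+p1^2+p2^2
  set Q : ℝ := q0^2+q1^2+q2^2
  set s : ℝ := p0*n0+p1*n1+p2*n2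
  set t : ℝ := q0*n0+q1*n1+q2*n2
  have h0 : 0 ≤ (P*Q*n0 - s*Q*p0 - t*P*q0)^2 + (P*Q*n1 - s*Q*p1 - t*P*q1)^2
      + (P*Q*n2 - s*Q*p2 - t*P*q2)^2 := by positivity
  have he : (P*Q*n0 - s*Q*p0 - t*P*q0)^2 + (P*Q*n1 - s*Q*p1 - t*P*q1)^2
      + (P*Q*n2 - s*Q*p2 - t*P*q2)^2 = P*Q*(P*Q - s^2*Q - t^2*P) := by
    simp only [P, Q, s, t]
    linear_combination ((p0^2+p1^2+p2^2)^2 * (q0^2+q1^2+q2^2)^2) * hn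
      + (2*(p0*n0+p1*n1+p2*n2)*(q0*n0+q1*n1+q2*n2)*(p0^2+p1^2+p2^2)*(q0^2+q1^2+q2^2)) * horth
  rw [he] at h0
  have h1 := (mul_nonneg_iff_of_pos_left (mul_pos hP0 hQ0)).mp h0
  linarith

lemma final_scalar (P Q s t α α' : ℝ) (hP : 0 ≤ P) (hQ : 0 ≤ Q) (hPQ : P + Q = 4)
    (hα : α^2 ≤ 1) (hα' : α'^2 ≤ 1) (hs : s^2 ≤ P) (ht : t^2 ≤ Q)
    (hbes : s^2*Q + t^2*P ≤ P*Q) : α*s + α'*t ≤ 2 := by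
  have habs : |α| ≤ 1 := by nlinarith [abs_nonneg α, sq_abs α]
  have habs' : |α'| ≤ 1 := by nlinarith [abs_nonneg α', sq_abs α']
  have h1 : α*s ≤ |s| := by
    calc α*s ≤ |α*s| := le_abs_self _
    _ = |α| * |s| := abs_mul _ _
    _ ≤ 1 * |s| := by have := abs_nonneg s; nlinarith
    _ = |s| := one_mul _
  have h2 : α'*t ≤ |t| := by
    calc α'*t ≤ |α'*t| := le_abs_self _
    _ = |α'| * |t| := abs_mul _ _
    _ ≤ 1 * |t| := by have := abs_nonneg t; nlinarith
    _ = |t| := one_mul _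
  have hst : |s| + |t| ≤ 2 := by
    rcases eq_or_lt_of_le hP with hP0 | hP0
    · have hs0 : s = 0 := by nlinarith [sq_nonneg s]
      rw [hs0, abs_zero, zero_add]
      nlinarith [abs_nonneg t, sq_abs t]
    rcases eq_or_lt_of_le hQ with hQ0 | hQ0
    · have ht0 : t = 0 := by nlinarith [sq_nonneg t]
      rw [ht0, abs_zero, add_zero]
      nlinarith [abs_nonneg s, sq_abs s]
    have hPQpos : 0 < P*Q := mul_pos hP0 hQ0
    have hbb : (P+Q)*(s^2*Q+t^2*P) ≤ (P+Q)*(P*Q) :=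
      mul_le_mul_of_nonneg_left hbes (by linarith)
    have habs2 : s^2 + t^2 + 2*|s*t| ≤ 4 := by
      rcases abs_cases (s*t) with ⟨h, _⟩ | ⟨h, _⟩ <;> rw [h] <;>
        nlinarith [hbb, sq_nonneg (s*Q - t*P), sq_nonneg (s*Q + t*P), hPQpos]
    have hsq : (|s| + |t|)^2 = s^2 + t^2 + 2*|s*t| := by
      rw [add_sq, sq_abs, sq_abs, abs_mul]; ring
    have h5 : (|s| + |t|)^2 ≤ 4 := by rw [hsq]; exact habs2
    nlinarith [abs_nonneg s, abs_nonneg t]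
  linarith

lemma core_scalar' (a0 a1 a2 c0 c1 c2 b0 b1 b2 d0 d1 d2 m0 m1 m2 n0 n1 n2 : ℝ)
    (ha : a0^2+a1^2+a2^2 = 1) (hc : c0^2+c1^2+c2^2 = 1)
    (hb : b0^2+b1^2+b2^2 = 1) (hd : d0^2+d1^2+d2^2 = 1)
    (hm : m0^2+m1^2+m2^2 = 1) (hn : n0^2+n1^2+n2^2 = 1) :
    (a0*m0+a1*m1+a2*m2) * ((b0+d0)*n0+(b1+d1)*n1+(b2+d2)*n2)
      + (c0*m0+c1*m1+c2*m2) * ((b0-d0)*n0+(b1-d1)*n1+(b2-d2)*n2) ≤ 2 := by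
  have hPQ : ((b0+d0)^2+(b1+d1)^2+(b2+d2)^2) + ((b0-d0)^2+(b1-d1)^2+(b2-d2)^2) = 4 := by
    nlinarith
  have horth : (b0+d0)*(b0-d0)+(b1+d1)*(b1-d1)+(b2+d2)*(b2-d2) = 0 := by nlinarith
  have hα : (a0*m0+a1*m1+a2*m2)^2 ≤ 1 := by
    have := cs3 a0 a1 a2 m0 m1 m2; rw [ha, hm] at this; linarith
  have hα' : (c0*m0+c1*m1+c2*m2)^2 ≤ 1 := by
    have := cs3 c0 c1 c2 m0 m1 m2; rw [hc, hm] at this; linarith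
  have hs : ((b0+d0)*n0+(b1+d1)*n1+(b2+d2)*n2)^2 ≤ (b0+d0)^2+(b1+d1)^2+(b2+d2)^2 := by
    have := cs3 (b0+d0) (b1+d1) (b2+d2) n0 n1 n2; rw [hn] at this; linarith
  have ht : ((b0-d0)*n0+(b1-d1)*n1+(b2-d2)*n2)^2 ≤ (b0-d0)^2+(b1-d1)^2+(b2-d2)^2 := by
    have := cs3 (b0-d0) (b1-d1) (b2-d2) n0 n1 n2; rw [hn] at this; linarith
  have hbes := bessel3 (b0+d0) (b1+d1) (b2+d2) (b0-d0) (b1-d1) (b2-d2) n0 n1 n2 hn horth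
  exact final_scalar _ _ _ _ _ _ (by positivity) (by positivity) hPQ hα hα' hs ht hbes

/-- Bloch vector of a qubit state vector. -/
noncomputable def bloch (u : Fin 2 → ℂ) : Fin 3 → ℝ :=
  ![2 * ((starRingEnd ℂ (u 0)) * u 1).re,
    2 * ((starRingEnd ℂ (u 0)) * u 1).im,
    ((u 0).re^2 + (u 0).im^2) - ((u 1).re^2 + (u 1).im^2)]

lemma trace_dotSigma (v : Fin 3 → ℝ) (u : Fin 2 → ℂ) :
    (dotSigma v * vecMulVec u (star u)).trace
      = ((v 0 * bloch u 0 + v 1 * bloch u 1 + v 2 * bloch u 2 : ℝ) : ℂ) := by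
  simp only [dotSigma, pauliX, pauliY, pauliZ, bloch, Matrix.trace, Matrix.diag,
    Matrix.mul_apply, Fin.sum_univ_two, Matrix.add_apply, Matrix.smul_apply,
    Matrix.vecMulVec_apply, Pi.star_apply, Matrix.cons_val', Matrix.cons_val_zero,
    Matrix.cons_val_one, Matrix.head_cons, Matrix.head_fin_const, Matrix.empty_val',
    Matrix.cons_val_fin_one, smul_eq_mul, Matrix.cons_val_succ]
  apply Complex.ext <;>
    (simp [Complex.add_re, Complex.add_im, Complex.mul_re, Complex.mul_im,
      Complex.ofReal_re, Complex.ofReal_im, Complex.I_re, Complex.I_im, RCLike.star_def,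
      Complex.conj_re, Complex.conj_im];
     simp only [← Complex.ofReal_pow, Complex.ofReal_re, Complex.ofReal_im]; ring)

lemma bloch_unit (u : Fin 2 → ℂ) (hu : ∑ x, ‖u x‖ ^ 2 = 1) :
    (bloch u 0)^2 + (bloch u 1)^2 + (bloch u 2)^2 = 1 := by
  have h : ((u 0).re^2 + (u 0).im^2) + ((u 1).re^2 + (u 1).im^2) = 1 := by
    have h0 : ‖u 0‖^2 = (u 0).re^2 + (u 0).im^2 := by
      rw [Complex.sq_norm, Complex.normSq_apply]; ring
    have h1 : ‖u 1‖^2 = (u 1).re^2 + (u 1).im^2 := by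
      rw [Complex.sq_norm, Complex.normSq_apply]; ring
    rw [Fin.sum_univ_two, h0, h1] at hu; linarith
  simp only [bloch, Matrix.cons_val_zero, Matrix.cons_val_one, Matrix.head_cons,
    Complex.mul_re, Complex.mul_im, Complex.conj_re, Complex.conj_im, Matrix.cons_val_two,
    Matrix.tail_cons]
  nlinarith [h]

/-- Every separable two-qubit density matrix satisfies the CHSH inequality
`Tr(B ρ) ≤ 2` for unit vectors `a, a', b, b'`. -/
theorem stmt3 (a a' b b' : Fin 3 → ℝ)
    (ha : ∑ i, (a i) ^ 2 = 1) (ha' : ∑ i, (a' i) ^ 2 = 1)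
    (hb : ∑ i, (b i) ^ 2 = 1) (hb' : ∑ i, (b' i) ^ 2 = 1)
    (ρ : Matrix ((Fin 2) × (Fin 2)) ((Fin 2) × (Fin 2)) ℂ)
    (hρ : ρ.PosSemidef) (htr : ρ.trace = 1) (hsep : SepState ρ) :
    (chshOp a a' b b' * ρ).trace ≤ 2 := by
  obtain ⟨k, p, uu, vv, hp0, hp1, hu, hv, hρeq⟩ := hsep
  subst hρeq
  rw [Finset.mul_sum, Matrix.trace_sum]
  simp only [Matrix.mul_smul, Matrix.trace_smul, chshOp, add_mul,
    ← Matrix.mul_kronecker_mul, Matrix.trace_add, Matrix.trace_kronecker,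
    trace_dotSigma]
  have key : ∀ x : Fin k,
      (a 0 * bloch (uu x) 0 + a 1 * bloch (uu x) 1 + a 2 * bloch (uu x) 2) *
          ((b 0 + b' 0) * bloch (vv x) 0 + (b 1 + b' 1) * bloch (vv x) 1
            + (b 2 + b' 2) * bloch (vv x) 2)
        + (a' 0 * bloch (uu x) 0 + a' 1 * bloch (uu x) 1 + a' 2 * bloch (uu x) 2) *
          ((b 0 - b' 0) * bloch (vv x) 0 + (b 1 - b' 1) * bloch (vv x) 1
            + (b 2 - b' 2) * bloch (vv x) 2) ≤ 2 := by
    intro x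
    rw [Fin.sum_univ_three] at ha ha' hb hb'
    exact core_scalar' _ _ _ _ _ _ _ _ _ _ _ _ _ _ _ _ _ _ ha ha' hb hb'
      (bloch_unit _ (hu x)) (bloch_unit _ (hv x))
  have hcast : (∑ x : Fin k,
      ((p x : ℂ) •
          (((a 0 * bloch (uu x) 0 + a 1 * bloch (uu x) 1 + a 2 * bloch (uu x) 2 : ℝ) : ℂ) *
            (((b + b') 0 * bloch (vv x) 0 + (b + b') 1 * bloch (vv x) 1
              + (b + b') 2 * bloch (vv x) 2 : ℝ) : ℂ)) +
        (p x : ℂ) •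
          (((a' 0 * bloch (uu x) 0 + a' 1 * bloch (uu x) 1 + a' 2 * bloch (uu x) 2 : ℝ) : ℂ) *
            (((b - b') 0 * bloch (vv x) 0 + (b - b') 1 * bloch (vv x) 1
              + (b - b') 2 * bloch (vv x) 2 : ℝ) : ℂ))))
      = ((∑ x : Fin k, p x *
          ((a 0 * bloch (uu x) 0 + a 1 * bloch (uu x) 1 + a 2 * bloch (uu x) 2) *
            ((b 0 + b' 0) * bloch (vv x) 0 + (b 1 + b' 1) * bloch (vv x) 1
              + (b 2 + b' 2) * bloch (vv x) 2)
          + (a' 0 * bloch (uu x) 0 + a' 1 * bloch (uu x) 1 + a' 2 * bloch (uu x) 2) *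
            ((b 0 - b' 0) * bloch (vv x) 0 + (b 1 - b' 1) * bloch (vv x) 1
              + (b 2 - b' 2) * bloch (vv x) 2)) : ℝ) : ℂ) := by
    rw [Complex.ofReal_sum]
    refine Finset.sum_congr rfl fun x _ => ?_
    simp only [Pi.add_apply, Pi.sub_apply, smul_eq_mul]
    push_cast
    ring
  rw [hcast, show (2:ℂ) = ((2:ℝ) : ℂ) by norm_num, Complex.real_le_real]
  calc (∑ x : Fin k, p x * _) ≤ ∑ x : Fin k, p x * 2 :=
        Finset.sum_le_sum fun x _ => mul_le_mul_of_nonneg_left (key x) (hp0 x)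
    _ = 2 := by rw [← Finset.sum_mul, hp1, one_mul]
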